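/- arXiv:2404.17424 — 6 statements merged into one kernel-verified Lean document; each statement's English description precedes it below -/
import Mathlib

section
/- For every real α ∈ (0,1), the function x ↦ f_α(x)/log(x+1) is strictly increasing on (0,∞), where f_α(x) := -(1-α)·(x/(x+1))·log(1/(1-α)) + ((αx+1)/(x+1))·log(αx+1). -/
open Real

noncomputable def stmt3F (α : ℝ) (u : ℝ) : ℝ :=
  (1 - α) * (1 - Real.exp (-u)) * Real.log (1 - α)
  + (α + (1 - α) * Real.exp (-u)) * Real.log (α + (1 - α) * Real.exp (-u))
  + (α + (1 - α) * Real.exp (-u)) * u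

noncomputable def stmt3F' (α : ℝ) (u : ℝ) : ℝ :=
  (1 - α) * Real.exp (-u) *
    (Real.log (1 - α) - Real.log (α + (1 - α) * Real.exp (-u)) - 1 - u)
  + (α + (1 - α) * Real.exp (-u))

noncomputable def stmt3F'' (α : ℝ) (u : ℝ) : ℝ :=
  (1 - α) * Real.exp (-u) *
    (Real.log (α + (1 - α) * Real.exp (-u)) + u - Real.log (1 - α) - 1
      + (1 - α) * Real.exp (-u) / (α + (1 - α) * Real.exp (-u)))

lemma stmt3_c_pos {α : ℝ} (h0 : 0 < α) (h1 : α < 1) (u : ℝ) :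
    0 < α + (1 - α) * Real.exp (-u) := by
  have := Real.exp_pos (-u)
  nlinarith

lemma stmt3_hasDerivAt_F {α : ℝ} (h0 : 0 < α) (h1 : α < 1) (u : ℝ) :
    HasDerivAt (stmt3F α) (stmt3F' α u) u := by
  have hc := stmt3_c_pos h0 h1 u
  have hE : HasDerivAt (fun u : ℝ => Real.exp (-u)) (Real.exp (-u) * (-1)) u :=
    (hasDerivAt_neg u).exp
  have hcd : HasDerivAt (fun u : ℝ => α + (1 - α) * Real.exp (-u))
      ((1 - α) * (Real.exp (-u) * (-1))) u := (hE.const_mul (1 - α)).const_add α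
  have hlog : HasDerivAt (fun u : ℝ => Real.log (α + (1 - α) * Real.exp (-u)))
      ((1 - α) * (Real.exp (-u) * (-1)) / (α + (1 - α) * Real.exp (-u))) u :=
    hcd.log hc.ne'
  have h1' := ((hE.const_sub 1).const_mul (1 - α)).mul_const (Real.log (1 - α))
  have h2' := hcd.mul hlog
  have h3' := hcd.mul (hasDerivAt_id u)
  have := (h1'.add h2').add h3'
  refine this.congr_deriv ?_
  unfold stmt3F'
  simp only [Pi.sub_apply, id]
  field_simp
  ring

lemma stmt3_hasDerivAt_F' {α : ℝ} (h0 : 0 < α) (h1 : α < 1) (u : ℝ) :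
    HasDerivAt (stmt3F' α) (stmt3F'' α u) u := by
  have hc := stmt3_c_pos h0 h1 u
  have hE : HasDerivAt (fun u : ℝ => Real.exp (-u)) (Real.exp (-u) * (-1)) u :=
    (hasDerivAt_neg u).exp
  have hcd : HasDerivAt (fun u : ℝ => α + (1 - α) * Real.exp (-u))
      ((1 - α) * (Real.exp (-u) * (-1))) u := (hE.const_mul (1 - α)).const_add α
  have hlog : HasDerivAt (fun u : ℝ => Real.log (α + (1 - α) * Real.exp (-u)))
      ((1 - α) * (Real.exp (-u) * (-1)) / (α + (1 - α) * Real.exp (-u))) u :=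
    hcd.log hc.ne'
  have hs : HasDerivAt (fun u : ℝ => (1 - α) * Real.exp (-u))
      ((1 - α) * (Real.exp (-u) * (-1))) u := hE.const_mul (1 - α)
  have hin := (((hasDerivAt_const u (Real.log (1 - α))).sub hlog).sub_const 1).sub
      (hasDerivAt_id u)
  have := (hs.mul hin).add hcd
  refine this.congr_deriv ?_
  unfold stmt3F''
  simp only [Pi.sub_apply, id]
  field_simp
  ring

lemma stmt3_F''_pos {α : ℝ} (h0 : 0 < α) (h1 : α < 1) (u : ℝ) :
    0 < stmt3F'' α u := by
  have hE := Real.exp_pos (-u)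
  have hc := stmt3_c_pos h0 h1 u
  set c := α + (1 - α) * Real.exp (-u) with hcdef
  have hs : 0 < (1 - α) * Real.exp (-u) := by nlinarith
  set w := (1 - α) * Real.exp (-u) / c with hwdef
  have hw0 : 0 < w := div_pos hs hc
  have hw1 : w < 1 := by
    rw [hwdef, div_lt_one hc]
    nlinarith
  have hlogw : Real.log w = Real.log (1 - α) - u - Real.log c := by
    rw [hwdef, Real.log_div hs.ne' hc.ne', Real.log_mul (by linarith) (Real.exp_ne_zero _),
      Real.log_exp]
    ring
  have hkey : Real.log w < w - 1 := Real.log_lt_sub_one_of_pos hw0 hw1.ne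
  have hpos : 0 < Real.log c + u - Real.log (1 - α) - 1 + w := by
    have h : Real.log c + u - Real.log (1 - α) = -Real.log w := by rw [hlogw]; ring
    rw [h]; linarith
  unfold stmt3F''
  exact mul_pos hs hpos

lemma stmt3_convex {α : ℝ} (h0 : 0 < α) (h1 : α < 1) :
    StrictConvexOn ℝ Set.univ (stmt3F α) := by
  have hd1 : deriv (stmt3F α) = stmt3F' α :=
    funext fun x => (stmt3_hasDerivAt_F h0 h1 x).deriv
  apply strictConvexOn_univ_of_deriv2_pos
  · exact continuous_iff_continuousAt.mpr fun x =>
      (stmt3_hasDerivAt_F h0 h1 x).continuousAt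
  · intro x
    have h2 : deriv^[2] (stmt3F α) x = stmt3F'' α x := by
      show deriv (deriv (stmt3F α)) x = _
      rw [hd1, (stmt3_hasDerivAt_F' h0 h1 x).deriv]
    rw [h2]
    exact stmt3_F''_pos h0 h1 x

lemma stmt3_F_zero {α : ℝ} (h0 : 0 < α) (h1 : α < 1) : stmt3F α 0 = 0 := by
  simp [stmt3F]

lemma stmt3_eq {α : ℝ} (h0 : 0 < α) (h1 : α < 1) {z : ℝ} (hz : 0 < z) :
    -(1 - α) * (z / (z + 1)) * Real.log (1 / (1 - α))
      + ((α * z + 1) / (z + 1)) * Real.log (α * z + 1)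
      = stmt3F α (Real.log (z + 1)) := by
  have hz1 : (0:ℝ) < z + 1 := by linarith
  have haz : (0:ℝ) < α * z + 1 := by nlinarith
  have hexp : Real.exp (-Real.log (z + 1)) = (z + 1)⁻¹ := by
    rw [Real.exp_neg, Real.exp_log hz1]
  unfold stmt3F
  rw [hexp]
  have hcval : α + (1 - α) * (z + 1)⁻¹ = (α * z + 1) / (z + 1) := by
    field_simp
    ring
  rw [hcval, Real.log_div haz.ne' hz1.ne', one_div, Real.log_inv]
  field_simp
  ring

theorem stmt_3 (α : ℝ) (h0 : 0 < α) (h1 : α < 1) :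
    StrictMonoOn
      (fun x : ℝ =>
        (-(1 - α) * (x / (x + 1)) * Real.log (1 / (1 - α))
          + ((α * x + 1) / (x + 1)) * Real.log (α * x + 1)) / Real.log (x + 1))
      (Set.Ioi (0 : ℝ)) := by
  intro x hx y hy hxy
  simp only [Set.mem_Ioi] at hx hy
  have hu : 0 < Real.log (x + 1) := Real.log_pos (by linarith)
  have hv : 0 < Real.log (y + 1) := Real.log_pos (by linarith)
  have huv : Real.log (x + 1) < Real.log (y + 1) :=
    Real.log_lt_log (by linarith) (by linarith)
  set u := Real.log (x + 1)
  set v := Real.log (y + 1)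
  have hcx := stmt3_eq h0 h1 hx
  have hcy := stmt3_eq h0 h1 hy
  simp only [hcx, hcy]
  rw [div_lt_div_iff₀ hu hv]
  -- strict convexity at points 0 and v with weights (v-u)/v and u/v
  have ha : (0:ℝ) < (v - u) / v := div_pos (by linarith) hv
  have hb : (0:ℝ) < u / v := div_pos hu hv
  have hab : (v - u) / v + u / v = 1 := by field_simp; ring
  have hconv := (stmt3_convex h0 h1).2 (Set.mem_univ (0:ℝ)) (Set.mem_univ v)
    hv.ne ha hb hab
  rw [stmt3_F_zero h0 h1] at hconv
  simp only [smul_eq_mul, mul_zero, zero_add] at hconv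
  rw [div_mul_cancel₀ u hv.ne'] at hconv
  have : stmt3F α u < u / v * stmt3F α v := by linarith
  calc stmt3F α u * v < (u / v * stmt3F α v) * v := by
        exact mul_lt_mul_of_pos_right this hv
    _ = stmt3F α v * u := by field_simp
end

section
/- For every real α ∈ [0,1) and every real x ≥ 1, ℓ_α(x) ≥ f_α(x), where ℓ_α(x) := ((1+α)x/(x+1))·log((αx+1)/(1-α)) − log((α(x-1)+1)/(1-α)) and f_α(x) := -(1-α)·(x/(x+1))·log(1/(1-α)) + ((αx+1)/(x+1))·log(αx+1). -/
/-!
Substituting `β = α / (1 - α) ≥ 0` turns the difference of the two sides into `logGap x β`, which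
vanishes at `β = 0` and is nondecreasing in `β`: its derivative
`x (x - 1) β² / ((1 + β (x + 1)) (1 + β) (1 + β x))` is nonnegative for `x ≥ 1`.
-/

open Real Set

noncomputable def logGap (x t : ℝ) : ℝ :=
  (x - 1) / (x + 1) * log (1 + t * (x + 1)) + log (1 + t) - log (1 + t * x)

lemma hasDerivAt_log_one_add_mul {c t : ℝ} (h : 1 + t * c ≠ 0) :
    HasDerivAt (fun s => log (1 + s * c)) (c / (1 + t * c)) t := by
  simpa using (((hasDerivAt_id t).mul_const c).const_add 1).log h

lemma hasDerivAt_logGap {x t : ℝ} (hx : 0 ≤ x) (ht : 0 ≤ t) :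
    HasDerivAt (logGap x)
      (x * (x - 1) * t ^ 2 / ((1 + t * (x + 1)) * (1 + t) * (1 + t * x))) t := by
  have h₁ : 0 < 1 + t * (x + 1) := by positivity
  have h₂ : 0 < 1 + t * 1 := by positivity
  have h₃ : 0 < 1 + t * x := by positivity
  have hd := (((hasDerivAt_log_one_add_mul h₁.ne').const_mul ((x - 1) / (x + 1))).add
    (hasDerivAt_log_one_add_mul h₂.ne')).sub (hasDerivAt_log_one_add_mul h₃.ne')
  simp only [mul_one] at hd h₂
  refine hd.congr_deriv ?_
  field_simp
  ring

lemma logGap_nonneg {x t : ℝ} (hx : 1 ≤ x) (ht : 0 ≤ t) : 0 ≤ logGap x t := by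
  have hderiv : ∀ s ∈ Ici (0 : ℝ), HasDerivAt (logGap x) _ s :=
    fun s hs => hasDerivAt_logGap (by linarith) hs
  have hmono : MonotoneOn (logGap x) (Ici 0) := by
    refine monotoneOn_of_hasDerivWithinAt_nonneg (convex_Ici 0)
      (fun s hs => (hderiv s hs).continuousAt.continuousWithinAt)
      (fun s hs => (hderiv s (interior_subset hs)).hasDerivWithinAt) fun s hs => ?_
    rw [interior_Ici] at hs
    have : 0 ≤ x * (x - 1) := mul_nonneg (by linarith) (by linarith)
    have : 0 < s := hs
    positivity
  simpa [logGap] using hmono self_mem_Ici ht ht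

theorem stmt_4 (α : ℝ) (h0 : 0 ≤ α) (h1 : α < 1) (x : ℝ) (hx : 1 ≤ x) :
    ((1 + α) * x / (x + 1)) * Real.log ((α * x + 1) / (1 - α))
        - Real.log ((α * (x - 1) + 1) / (1 - α))
      ≥ -(1 - α) * (x / (x + 1)) * Real.log (1 / (1 - α))
        + ((α * x + 1) / (x + 1)) * Real.log (α * x + 1) := by
  have hα : 0 < 1 - α := by linarith
  obtain ⟨β, hβ⟩ : ∃ β, α / (1 - α) = β := ⟨_, rfl⟩
  have hu : (α * x + 1) / (1 - α) = 1 + β * (x + 1) := by rw [← hβ]; field_simp; ring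
  have hv : (α * (x - 1) + 1) / (1 - α) = 1 + β * x := by rw [← hβ]; field_simp; ring
  have hw : 1 / (1 - α) = 1 + β := by rw [← hβ]; field_simp; ring
  have hlog : log (α * x + 1) = log (1 + β * (x + 1)) - log (1 + β) := by
    rw [← hu, ← hw, log_div (by positivity) hα.ne', log_div one_ne_zero hα.ne', log_one]
    ring
  have hgap := logGap_nonneg hx (hβ ▸ div_nonneg h0 hα.le)
  rw [logGap] at hgap
  rw [hu, hv, hw, hlog, ge_iff_le, ← sub_nonneg]
  convert hgap using 1
  field_simp
  ring
end

section
/- Let (x_i, y_i), i = 1,...,k, be pairs of positive real numbers satisfying Σ_{i=1}^k x_i ≤ Σ_{i=1}^k y_i. Then there exists a permutation σ of {1,...,k} such that for every 1 ≤ s ≤ k, Σ_{i=1}^{s} x_{σ(i)} ≤ Σ_{i=1}^{s} y_{σ(i)}. -/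
open Finset

lemma Iic_succ_eq {k : ℕ} (t : Fin k) :
    Finset.Iic (t.succ) = insert 0 ((Finset.Iic t).map (Fin.succEmb k)) := by
  ext i
  refine Fin.cases ?_ ?_ i
  · simp [Fin.zero_le]
  · intro j
    simp [Fin.succ_le_succ_iff, Fin.succ_ne_zero, Fin.succEmb, Fin.succ_inj]

lemma sum_Iic_succ {k : ℕ} (f : Fin (k + 1) → ℝ) (t : Fin k) :
    ∑ i ∈ Finset.Iic t.succ, f i = f 0 + ∑ i ∈ Finset.Iic t, f i.succ := by
  rw [Iic_succ_eq, Finset.sum_insert, Finset.sum_map]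
  · rfl
  · simp [Fin.succEmb, Fin.succ_ne_zero]

lemma aux : ∀ (k : ℕ) (c : ℝ), 0 ≤ c → ∀ (x y : Fin k → ℝ),
    (∑ i, x i ≤ c + ∑ i, y i) →
    ∃ σ : Equiv.Perm (Fin k), ∀ s : Fin k,
      ∑ i ∈ Finset.Iic s, x (σ i) ≤ c + ∑ i ∈ Finset.Iic s, y (σ i) := by
  intro k
  induction k with
  | zero => intro c hc x y hsum; exact ⟨1, fun s => s.elim0⟩
  | succ k ih =>
    intro c hc x y hsum
    -- find p with x p ≤ c + y p
    have hp : ∃ p : Fin (k + 1), x p ≤ c + y p := by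
      by_contra h
      push_neg at h
      have h1 : ∑ i : Fin (k + 1), (c + y i) < ∑ i, x i :=
        Finset.sum_lt_sum_of_nonempty (by simp) (fun i _ => h i)
      rw [Finset.sum_add_distrib, Finset.sum_const] at h1
      simp only [Finset.card_univ, Fintype.card_fin, nsmul_eq_mul] at h1
      have : c + ∑ i, y i ≤ (k + 1 : ℕ) * c + ∑ i, y i := by
        have : (1 : ℝ) * c ≤ (k + 1 : ℕ) * c := by
          apply mul_le_mul_of_nonneg_right _ hc
          push_cast; linarith [Nat.cast_nonneg (α := ℝ) k]
        linarith
      linarith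
    obtain ⟨p, hpxy⟩ := hp
    set c' : ℝ := c + y p - x p with hc'
    have hc'0 : 0 ≤ c' := by simp [hc']; linarith
    set x' : Fin k → ℝ := fun i => x (Equiv.swap 0 p i.succ) with hx'
    set y' : Fin k → ℝ := fun i => y (Equiv.swap 0 p i.succ) with hy'
    have hxsum : ∑ i, x' i = ∑ i, x i - x p := by
      have := Equiv.sum_comp (Equiv.swap 0 p) x
      rw [← this, Fin.sum_univ_succ]
      simp [x']
    have hysum : ∑ i, y' i = ∑ i, y i - y p := by
      have := Equiv.sum_comp (Equiv.swap 0 p) y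
      rw [← this, Fin.sum_univ_succ]
      simp [y']
    have hsum' : ∑ i, x' i ≤ c' + ∑ i, y' i := by
      rw [hxsum, hysum, hc']; linarith
    obtain ⟨σ', hσ'⟩ := ih c' hc'0 x' y' hsum'
    refine ⟨Equiv.Perm.decomposeFin.symm (p, σ'), ?_⟩
    intro s
    refine Fin.cases ?_ ?_ s
    · rw [show Finset.Iic (0 : Fin (k + 1)) = {0} by ext i; simp [Fin.le_zero_iff]]
      simpa using hpxy
    · intro t
      rw [sum_Iic_succ, sum_Iic_succ]
      simp only [Equiv.Perm.decomposeFin_symm_apply_zero,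
        Equiv.Perm.decomposeFin_symm_apply_succ]
      have := hσ' t
      simp only [hx', hy'] at this
      linarith

theorem stmt_6 (k : ℕ) (hk : 0 < k) (x y : Fin k → ℝ)
    (hx : ∀ i, 0 < x i) (hy : ∀ i, 0 < y i)
    (hsum : ∑ i, x i ≤ ∑ i, y i) :
    ∃ σ : Equiv.Perm (Fin k), ∀ s : Fin k,
      ∑ i ∈ Finset.Iic s, x (σ i) ≤ ∑ i ∈ Finset.Iic s, y (σ i) := by
  have := aux k 0 le_rfl x y (by simpa using hsum)
  simpa using this
end

section
/- Let n be a positive integer, e a divisor of n, and m a positive integer with gcd(m·e, n) = e. If d_1 and d_2 are divisors of n with d_1 + d_2 = m·e, and d = gcd(d_1, d_2), then d divides e and d = gcd(d_1, e) = gcd(d_2, e), and moreover d_1/d and d_2/d are coprime divisors of n/e. -/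
theorem stmt_8 (n e m d1 d2 d : ℕ) (hn : 0 < n) (he : e ∣ n) (hm : 0 < m)
    (hgcd : Nat.gcd (m * e) n = e) (hd1 : d1 ∣ n) (hd2 : d2 ∣ n)
    (hsum : d1 + d2 = m * e) (hd : d = Nat.gcd d1 d2) :
    d ∣ e ∧ d = Nat.gcd d1 e ∧ d = Nat.gcd d2 e ∧
      (d1 / d) ∣ (n / e) ∧ (d2 / d) ∣ (n / e) ∧ Nat.Coprime (d1 / d) (d2 / d) := by
  subst hd
  have hd1pos : 0 < d1 := Nat.pos_of_ne_zero (by rintro rfl; simp at hd1; omega)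
  have hd2pos : 0 < d2 := Nat.pos_of_ne_zero (by rintro rfl; simp at hd2; omega)
  have hdpos : 0 < Nat.gcd d1 d2 := Nat.gcd_pos_of_pos_left _ hd1pos
  have hdd1 : Nat.gcd d1 d2 ∣ d1 := Nat.gcd_dvd_left _ _
  have hdd2 : Nat.gcd d1 d2 ∣ d2 := Nat.gcd_dvd_right _ _
  have hde : Nat.gcd d1 d2 ∣ e := by
    rw [← hgcd]
    exact Nat.dvd_gcd (hsum ▸ Nat.dvd_add hdd1 hdd2) (hdd1.trans hd1)
  have h1e : Nat.gcd d1 d2 = Nat.gcd d1 e := by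
    apply Nat.dvd_antisymm (Nat.dvd_gcd hdd1 hde)
    apply Nat.dvd_gcd (Nat.gcd_dvd_left _ _)
    have : Nat.gcd d1 e ∣ m * e := (Nat.gcd_dvd_right _ _).trans (dvd_mul_left e m)
    have h2 : Nat.gcd d1 e ∣ m * e - d1 := Nat.dvd_sub this (Nat.gcd_dvd_left _ _)
    have : m * e - d1 = d2 := by omega
    rwa [this] at h2
  have h2e : Nat.gcd d1 d2 = Nat.gcd d2 e := by
    apply Nat.dvd_antisymm (Nat.dvd_gcd hdd2 hde)
    refine Nat.dvd_gcd ?_ (Nat.gcd_dvd_left _ _)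
    have : Nat.gcd d2 e ∣ m * e := (Nat.gcd_dvd_right _ _).trans (dvd_mul_left e m)
    have h2 : Nat.gcd d2 e ∣ m * e - d2 := Nat.dvd_sub this (Nat.gcd_dvd_left _ _)
    have : m * e - d2 = d1 := by omega
    rwa [this] at h2
  have hepos : 0 < e := Nat.pos_of_dvd_of_pos he hn
  have key : ∀ x : ℕ, x ∣ n → Nat.gcd d1 d2 = Nat.gcd x e → x / Nat.gcd d1 d2 ∣ n / e := by
    intro x hx hxe
    have hcop : Nat.Coprime (x / Nat.gcd d1 d2) (e / Nat.gcd d1 d2) := by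
      rw [hxe]; exact Nat.coprime_div_gcd_div_gcd (hxe ▸ hdpos)
    have hdx : Nat.gcd d1 d2 ∣ x := hxe ▸ Nat.gcd_dvd_left _ _
    obtain ⟨j, hj⟩ := hde
    obtain ⟨k, hk⟩ := he
    obtain ⟨l, hl⟩ := hx
    have hdpos' : 0 < Nat.gcd d1 d2 := hdpos
    have hnd : n / Nat.gcd d1 d2 = (n / e) * (e / Nat.gcd d1 d2) := by
      subst hj hk
      rw [Nat.mul_div_cancel_left _ hdpos', Nat.mul_div_cancel_left _ (by positivity),
        Nat.mul_assoc, Nat.mul_div_cancel_left _ hdpos', Nat.mul_comm]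
    have hdvdnd : x / Nat.gcd d1 d2 ∣ n / Nat.gcd d1 d2 := by
      refine ⟨l, ?_⟩
      rw [hl, Nat.mul_comm, Nat.mul_div_assoc _ hdx, Nat.mul_comm]
    rw [hnd] at hdvdnd
    exact hcop.dvd_of_dvd_mul_right hdvdnd
  refine ⟨hde, h1e, h2e, key d1 hd1 h1e, key d2 hd2 h2e, Nat.coprime_div_gcd_div_gcd hdpos⟩
end

section
/- For every positive integer n and every 0 ≤ δ ≤ 1, Σ_{d ∣ n} κ_2(n/d)^{1−δ} ≤ τ(n)^{2−δ}, where κ_2(m) := ∏_{p^v ∥ m} (2v+1) and τ(n) is the number of divisors of n. -/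
open Finset ArithmeticFunction

lemma kapPos (d : ℕ) : 0 < d.factorization.prod fun _ v => 2 * (v : ℝ) + 1 := by
  rw [Finsupp.prod]
  exact Finset.prod_pos fun p _ => by positivity

noncomputable def kap (t : ℝ) : ArithmeticFunction ℝ :=
  ⟨fun d => if d = 0 then 0 else (d.factorization.prod fun _ v => 2 * (v : ℝ) + 1) ^ t,
   by simp⟩

lemma kap_apply (t : ℝ) {d : ℕ} (hd : d ≠ 0) :
    kap t d = (d.factorization.prod fun _ v => 2 * (v : ℝ) + 1) ^ t := by
  simp [kap, hd]

lemma kap_mult (t : ℝ) : (kap t).IsMultiplicative := by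
  constructor
  · simp [kap]
  · intro m n hmn
    rcases eq_or_ne m 0 with rfl | hm
    · rw [Nat.coprime_zero_left] at hmn; subst hmn; simp [kap]
    rcases eq_or_ne n 0 with rfl | hn'
    · rw [Nat.coprime_zero_right] at hmn; subst hmn; simp [kap]
    have hdis : Disjoint m.factorization.support n.factorization.support := by
      simpa using hmn.disjoint_primeFactors
    rw [kap_apply _ (mul_ne_zero hm hn'), kap_apply _ hm, kap_apply _ hn',
      Nat.factorization_mul_of_coprime hmn,
      Finsupp.prod_add_index_of_disjoint hdis]
    rw [Real.mul_rpow (kapPos m).le (kapPos n).le]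

lemma sum_odd (k : ℕ) : ∑ i ∈ Finset.range (k + 1), (2 * i + 1) = (k + 1) ^ 2 := by
  induction k with
  | zero => simp
  | succ k ih => rw [Finset.sum_range_succ, ih]; ring

lemma key (t : ℝ) (ht0 : 0 ≤ t) (ht1 : t ≤ 1) (k : ℕ) :
    ∑ i ∈ Finset.range (k + 1), (2 * (i : ℝ) + 1) ^ t ≤ ((k : ℝ) + 1) ^ (1 + t) := by
  set M : ℝ := (k : ℝ) + 1 with hM
  have hMpos : (0 : ℝ) < M := by positivity
  have hbound : ∀ i ∈ Finset.range (k + 1),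
      (2 * (i : ℝ) + 1) ^ t ≤ M ^ t * (t * ((2 * (i : ℝ) + 1) / M) + (1 - t) * 1) := by
    intro i _
    have h1 : (2 * (i : ℝ) + 1) ^ t
        = M ^ t * (((2 * (i : ℝ) + 1) / M) ^ t * 1 ^ (1 - t)) := by
      rw [Real.one_rpow, mul_one, Real.div_rpow (by positivity) hMpos.le]
      field_simp
    rw [h1]
    have := Real.geom_mean_le_arith_mean2_weighted ht0 (by linarith : (0:ℝ) ≤ 1 - t)
      (by positivity : (0:ℝ) ≤ (2 * (i : ℝ) + 1) / M) zero_le_one (by ring)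
    exact mul_le_mul_of_nonneg_left this (by positivity)
  calc ∑ i ∈ Finset.range (k + 1), (2 * (i : ℝ) + 1) ^ t
      ≤ ∑ i ∈ Finset.range (k + 1), M ^ t * (t * ((2 * (i : ℝ) + 1) / M) + (1 - t) * 1) :=
        Finset.sum_le_sum hbound
    _ = M ^ t * ∑ i ∈ Finset.range (k + 1), (t * ((2 * (i : ℝ) + 1) / M) + (1 - t) * 1) := by
        rw [Finset.mul_sum]
    _ = M ^ t * M := by
        have hs : (∑ i ∈ Finset.range (k + 1), (2 * (i : ℝ) + 1)) = M ^ 2 := by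
          have h4 := congrArg (fun x : ℕ => (x : ℝ)) (sum_odd k)
          push_cast at h4
          rw [hM]
          convert h4 using 2 <;> ring
        have hsum2 : ∑ i ∈ Finset.range (k + 1), (t * ((2 * (i : ℝ) + 1) / M) + (1 - t) * 1)
            = M := by
          rw [Finset.sum_add_distrib, Finset.sum_const, Finset.card_range]
          have h3 : ∑ i ∈ Finset.range (k + 1), t * ((2 * (i : ℝ) + 1) / M)
              = t / M * ∑ i ∈ Finset.range (k + 1), (2 * (i : ℝ) + 1) := by
            rw [Finset.mul_sum]
            exact Finset.sum_congr rfl fun i _ => by ring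
          rw [h3, hs]
          simp only [nsmul_eq_mul, mul_one]
          push_cast
          rw [← hM]
          field_simp
          ring
        rw [hsum2]
    _ = M ^ (1 + t) := by
        rw [Real.rpow_add hMpos, Real.rpow_one]; ring

theorem stmt_14 (n : ℕ) (hn : 0 < n) (δ : ℝ) (h0 : 0 ≤ δ) (h1 : δ ≤ 1) :
    ∑ d ∈ n.divisors,
        ((((n / d).factorization.prod fun _ v => 2 * v + 1) : ℝ)) ^ (1 - δ)
      ≤ (n.divisors.card : ℝ) ^ (2 - δ) := by
  have hne : n ≠ 0 := hn.ne'
  set t : ℝ := 1 - δ with ht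
  have ht0 : 0 ≤ t := by rw [ht]; linarith
  have ht1 : t ≤ 1 := by rw [ht]; linarith
  have h2δ : (2 : ℝ) - δ = 1 + t := by rw [ht]; ring
  rw [Nat.sum_div_divisors n (fun d => (d.factorization.prod fun _ v => 2 * (v : ℝ) + 1) ^ t)]
  set F : ArithmeticFunction ℝ :=
    ((ArithmeticFunction.zeta : ArithmeticFunction ℕ) : ArithmeticFunction ℝ) * kap t with hF
  have hFmult : F.IsMultiplicative :=
    (ArithmeticFunction.isMultiplicative_zeta.natCast).mul (kap_mult t)
  have hLHS : ∑ d ∈ n.divisors,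
      ((d.factorization.prod fun _ v => 2 * (v : ℝ) + 1)) ^ t = F n := by
    rw [hF, ArithmeticFunction.coe_zeta_mul_apply]
    exact Finset.sum_congr rfl fun d hd =>
      (kap_apply t (Nat.pos_of_mem_divisors hd).ne').symm
  rw [hLHS, hFmult.multiplicative_factorization F hne, h2δ, Nat.card_divisors hne]
  simp only [Finsupp.prod]
  rw [Nat.cast_prod,
    ← Real.finset_prod_rpow _ _ (fun i _ => by positivity)]
  apply Finset.prod_le_prod
  · intro p hp
    have hppr : p.Prime := Nat.prime_of_mem_primeFactors (by simpa using hp)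
    rw [hF, ArithmeticFunction.coe_zeta_mul_apply, Nat.sum_divisors_prime_pow hppr]
    refine Finset.sum_nonneg fun i _ => ?_
    rw [kap_apply t (pow_ne_zero i hppr.pos.ne')]
    exact Real.rpow_nonneg (kapPos _).le t
  · intro p hp
    have hppr : p.Prime := Nat.prime_of_mem_primeFactors (by simpa using hp)
    rw [hF, ArithmeticFunction.coe_zeta_mul_apply, Nat.sum_divisors_prime_pow hppr]
    have hterm : ∀ i : ℕ, kap t (p ^ i) = (2 * (i : ℝ) + 1) ^ t := by
      intro i
      rw [kap_apply t (pow_ne_zero i hppr.pos.ne')]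
      congr 1
      rw [Nat.Prime.factorization_pow hppr, Finsupp.prod_single_index]
      simp
    calc ∑ i ∈ Finset.range (n.factorization p + 1), kap t (p ^ i)
        = ∑ i ∈ Finset.range (n.factorization p + 1), (2 * (i : ℝ) + 1) ^ t :=
          Finset.sum_congr rfl fun i _ => hterm i
      _ ≤ ((n.factorization p : ℝ) + 1) ^ (1 + t) := key t ht0 ht1 _
      _ = ((n.factorization p + 1 : ℕ) : ℝ) ^ (1 + t) := by push_cast; ring_nf
end

section
/- Let n be a squarefree positive integer with r = ω(n) distinct prime factors, and let j ≥ 1. Then Σ_{0 ≤ i ≤ jr/(j+2)} C(r, i) · j^i ≤ ( (j+2) / 2^{2/(j+2)} )^r · (j+2)/2, where C(r,i) is the binomial coefficient. -/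
theorem stmt_15 (r j : ℕ) (hj : 1 ≤ j) :
    ∑ i ∈ (Finset.range (r + 1)).filter (fun i => i * (j + 2) ≤ j * r),
        ((r.choose i : ℝ) * (j : ℝ) ^ i)
      ≤ (((j : ℝ) + 2) / 2 ^ ((2 : ℝ) / ((j : ℝ) + 2))) ^ r * (((j : ℝ) + 2) / 2) := by
  have hc : (0:ℝ) < (j:ℝ) + 2 := by positivity
  set c : ℝ := (j:ℝ) + 2 with hcdef
  set A : ℝ := (2:ℝ) ^ (((j:ℝ) * r) / c) with hAdef
  have hA0 : 0 < A := Real.rpow_pos_of_pos (by norm_num) _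
  have key : ∑ i ∈ (Finset.range (r + 1)).filter (fun i => i * (j + 2) ≤ j * r),
      ((r.choose i : ℝ) * (j : ℝ) ^ i)
      ≤ A * ((c/2) ^ r) := by
    have h1 : ∀ i ∈ (Finset.range (r + 1)).filter (fun i => i * (j + 2) ≤ j * r),
        (r.choose i : ℝ) * (j : ℝ) ^ i ≤ A * ((r.choose i : ℝ) * ((j:ℝ)/2) ^ i) := by
      intro i hi
      simp only [Finset.mem_filter, Finset.mem_range] at hi
      have hle : (i:ℝ) ≤ ((j:ℝ) * r) / c := by
        rw [hcdef, le_div_iff₀ (by positivity : (0:ℝ) < (j:ℝ)+2)]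
        have h2 : ((i * (j+2) : ℕ) : ℝ) ≤ ((j * r : ℕ) : ℝ) := by exact_mod_cast hi.2
        push_cast at h2
        linarith
      have h2 : (2:ℝ) ^ (i:ℕ) ≤ A := by
        rw [hAdef, ← Real.rpow_natCast (2:ℝ) i]
        exact Real.rpow_le_rpow_of_exponent_le (by norm_num) hle
      have hexp : ((j:ℝ)/2) ^ i * (2:ℝ) ^ i = (j:ℝ) ^ i := by
        rw [← mul_pow]; norm_num
      calc (r.choose i : ℝ) * (j : ℝ) ^ i
          = ((r.choose i : ℝ) * ((j:ℝ)/2) ^ i) * (2:ℝ) ^ i := by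
            rw [mul_assoc, hexp]
        _ ≤ ((r.choose i : ℝ) * ((j:ℝ)/2) ^ i) * A := by
            apply mul_le_mul_of_nonneg_left h2 (by positivity)
        _ = A * ((r.choose i : ℝ) * ((j:ℝ)/2) ^ i) := by ring
    calc ∑ i ∈ (Finset.range (r + 1)).filter (fun i => i * (j + 2) ≤ j * r),
          ((r.choose i : ℝ) * (j : ℝ) ^ i)
        ≤ ∑ i ∈ (Finset.range (r + 1)).filter (fun i => i * (j + 2) ≤ j * r),
          A * ((r.choose i : ℝ) * ((j:ℝ)/2) ^ i) := Finset.sum_le_sum h1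
      _ ≤ ∑ i ∈ Finset.range (r + 1),
          A * ((r.choose i : ℝ) * ((j:ℝ)/2) ^ i) := by
          apply Finset.sum_le_sum_of_subset_of_nonneg (Finset.filter_subset _ _)
          intro i _ _
          positivity
      _ = A * ∑ i ∈ Finset.range (r + 1),
          ((r.choose i : ℝ) * ((j:ℝ)/2) ^ i) := by rw [Finset.mul_sum]
      _ = A * ((c/2) ^ r) := by
          congr 1
          have := add_pow ((j:ℝ)/2) 1 r
          simp only [one_pow, mul_one] at this
          rw [show c/2 = (j:ℝ)/2 + 1 by rw [hcdef]; ring, this]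
          apply Finset.sum_congr rfl
          intro i _
          ring
  have hrw : A * ((c/2) ^ r) = (c / 2 ^ ((2:ℝ)/c)) ^ r := by
    have hc0 : ((j:ℝ)+2) ≠ 0 := by positivity
    have e1 : ((2:ℝ) ^ ((2:ℝ)/c)) ^ r = (2:ℝ) ^ ((2:ℝ)/c * (r:ℝ)) := by
      rw [← Real.rpow_natCast ((2:ℝ) ^ ((2:ℝ)/c)) r, ← Real.rpow_mul (by norm_num : (0:ℝ) ≤ 2)]
    have e2 : (2:ℝ) ^ (r:ℕ) = (2:ℝ) ^ ((r:ℝ)) := (Real.rpow_natCast 2 r).symm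
    have eexp : ((j:ℝ)*r)/c - (r:ℝ) = -((2:ℝ)/c * (r:ℝ)) := by
      rw [hcdef]; field_simp; ring
    have e3 : (2:ℝ) ^ (((j:ℝ)*r)/c) / (2:ℝ) ^ ((r:ℝ)) = ((2:ℝ) ^ ((2:ℝ)/c * (r:ℝ)))⁻¹ := by
      rw [← Real.rpow_sub (by norm_num : (0:ℝ) < 2), eexp,
          Real.rpow_neg (by norm_num : (0:ℝ) ≤ 2)]
    calc A * ((c/2) ^ r)
        = (2:ℝ) ^ (((j:ℝ)*r)/c) * (c^r / (2:ℝ) ^ ((r:ℝ))) := by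
          rw [hAdef, div_pow, e2]
      _ = c^r * ((2:ℝ) ^ (((j:ℝ)*r)/c) / (2:ℝ) ^ ((r:ℝ))) := by ring
      _ = c^r * ((2:ℝ) ^ ((2:ℝ)/c * (r:ℝ)))⁻¹ := by rw [e3]
      _ = c^r / ((2:ℝ) ^ ((2:ℝ)/c))^r := by rw [e1]; ring
      _ = (c / 2 ^ ((2:ℝ)/c)) ^ r := by rw [div_pow]
  rw [hrw] at key
  have h1le : (1:ℝ) ≤ c/2 := by
    have h1j : (1:ℝ) ≤ (j:ℝ) := by exact_mod_cast hj
    rw [hcdef]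
    linarith
  calc ∑ i ∈ (Finset.range (r + 1)).filter (fun i => i * (j + 2) ≤ j * r),
        ((r.choose i : ℝ) * (j : ℝ) ^ i)
      ≤ (c / 2 ^ ((2:ℝ)/c)) ^ r := key
    _ ≤ (c / 2 ^ ((2:ℝ)/c)) ^ r * (c/2) := by
        apply le_mul_of_one_le_right (by positivity) h1le
end
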